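/- In the Thorup-Zwick random sampling, where each vertex of A_{i-1} is placed in A_i independently with probability p = n^{-1/k}, the expected size of B_i(u) for any fixed vertex u and any 0 ≤ i ≤ k-2 is at most 1/p = n^{1/k}. Consequently, the expected total bunch size satisfies E[|B(u)|] ≤ k·n^{1/k} + E[|A_{k-1}|]. -/

import Mathlib

/-! Order the vertices of `A_i` by their distance from `u`. A vertex `x ∈ A_i` can lie in
`B_i(u)` only if no vertex of `A_i` up to and including `x` is sampled into `A_{i+1}`. As `A_i`
is determined by the samples of the levels `≤ i`, which are independent of those of level
`i + 1`, we may freeze `A_i = S`: the `r`-th vertex of `S` then survives with probability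
`(1 - p)^r`, so `E|B_i(u)| ≤ ∑_{r ≥ 1} (1 - p)^r ≤ 1/p`. The bound on the whole bunch follows
from `|B(u)| ≤ ∑_{i < k-1} |B_i(u)| + |A_{k-1}|` and linearity of expectation. -/

open MeasureTheory ENNReal
open scoped Classical

/-- The distance from `u` to a finite set `S` of vertices (`⊤` if `S` is empty). -/
noncomputable def distToFinset {V : Type*} (d : V → V → ℝ≥0∞) (S : Finset V) (u : V) : ℝ≥0∞ :=
  ⨅ x ∈ S, d u x

open Finset ProbabilityTheory

lemma injOn_card_filter_le {V β : Type*} [LinearOrder β] {f : V → β} {S : Finset V}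
    (hf : Set.InjOn f S) : Set.InjOn (fun x => #(S.filter (f · ≤ f x))) S := by
  have key : ∀ x ∈ S, ∀ y ∈ S, f x ≤ f y →
      #(S.filter (f · ≤ f x)) = #(S.filter (f · ≤ f y)) → x = y := by
    intro x hx y hy hxy hcard
    have hsub : S.filter (f · ≤ f x) ⊆ S.filter (f · ≤ f y) :=
      monotone_filter_right _ fun _ _ hz => hz.trans hxy
    have hy' : y ∈ S.filter (f · ≤ f x) :=
      (eq_of_subset_of_card_le hsub hcard.ge) ▸ mem_filter.mpr ⟨hy, le_rfl⟩
    exact hf hx hy (le_antisymm hxy (mem_filter.mp hy').2)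
  intro x hx y hy h
  rcases le_total (f x) (f y) with hxy | hyx
  · exact key x hx y hy hxy h
  · exact (key y hy x hx hyx h.symm).symm

lemma sum_one_sub_pow_card_filter_le {V β : Type*} [LinearOrder β] {f : V → β} {S : Finset V}
    (hf : Set.InjOn f S) {p : ℝ≥0∞} (hp : p ≤ 1) :
    ∑ x ∈ S, (1 - p) ^ #(S.filter (f · ≤ f x)) ≤ p⁻¹ :=
  calc ∑ x ∈ S, (1 - p) ^ #(S.filter (f · ≤ f x))
      = ∑ j ∈ S.image (fun x => #(S.filter (f · ≤ f x))), (1 - p) ^ j :=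
        (sum_image (injOn_card_filter_le hf)).symm
    _ ≤ ∑' j, (1 - p) ^ j := ENNReal.sum_le_tsum _
    _ = p⁻¹ := by rw [ENNReal.tsum_geometric, ENNReal.sub_sub_cancel one_ne_top hp]

lemma measure_forall_eq_false {ι Ω : Type*} [MeasurableSpace Ω] {μ : Measure Ω}
    [IsProbabilityMeasure μ] {X : ι → Ω → Bool} (hX : ∀ j, Measurable (X j))
    (hindep : iIndepFun X μ) {p : ℝ≥0∞} (hp : ∀ j, μ {ω | X j ω = true} = p) (J : Finset ι) :
    μ {ω | ∀ j ∈ J, X j ω = false} = (1 - p) ^ #J := by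
  have hfalse : ∀ j, μ (X j ⁻¹' {false}) = 1 - p := fun j => by
    have hcompl : X j ⁻¹' {false} = (X j ⁻¹' {true})ᶜ := by ext ω; simp
    rw [hcompl, prob_compl_eq_one_sub ((hX j) (measurableSet_singleton true)), ← hp j]
    rfl
  have hprod := hindep.measure_inter_preimage_eq_mul J (sets := fun _ => {false})
    fun _ _ => measurableSet_singleton false
  simp only [hfalse, prod_const] at hprod
  rw [← hprod]
  congr 1
  ext ω
  simp

lemma measurableSet_forall_eq_false {ι Ω : Type*} [mΩ : MeasurableSpace Ω] {X : ι → Ω → Bool}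
    (hX : ∀ j, Measurable (X j)) (J : Finset ι) :
    MeasurableSet {ω | ∀ j ∈ J, X j ω = false} := by
  simp only [Set.ofPred_forall]
  exact MeasurableSet.biInter J.countable_toSet fun j _ => hX j (measurableSet_singleton false)

lemma card_filter_eq_sum_indicator {ι Ω : Type*} (S : Finset ι) (E : ι → Set Ω)
    [∀ ω, DecidablePred (ω ∈ E ·)] (ω : Ω) :
    (#(S.filter (ω ∈ E ·)) : ℝ≥0∞) = ∑ x ∈ S, (E x).indicator 1 ω := by
  simp only [card_filter, Nat.cast_sum, Nat.cast_ite, Nat.cast_one, Nat.cast_zero,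
    Set.indicator_apply, Pi.one_apply]

lemma measurable_card_filter {ι Ω : Type*} [mΩ : MeasurableSpace Ω] (S : Finset ι)
    {E : ι → Set Ω} [∀ ω, DecidablePred (ω ∈ E ·)] (hE : ∀ x, MeasurableSet (E x)) :
    Measurable fun ω => (#(S.filter (ω ∈ E ·)) : ℝ≥0∞) := by
  simp_rw [card_filter_eq_sum_indicator]
  exact measurable_sum _ fun x _ => measurable_one.indicator (hE x)

lemma lintegral_card_filter {ι Ω : Type*} [MeasurableSpace Ω] {μ : Measure Ω} (S : Finset ι)
    {E : ι → Set Ω} [∀ ω, DecidablePred (ω ∈ E ·)] (hE : ∀ x, MeasurableSet (E x)) :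
    ∫⁻ ω, #(S.filter (ω ∈ E ·)) ∂μ = ∑ x ∈ S, μ (E x) := by
  simp_rw [card_filter_eq_sum_indicator]
  rw [lintegral_finsetSum _ fun x _ => measurable_one.indicator (hE x)]
  exact sum_congr rfl fun x _ => lintegral_indicator_one (hE x)

lemma lintegral_apply_le_of_indep {Ω α : Type*} [mΩ : MeasurableSpace Ω] {μ : Measure Ω}
    [IsProbabilityMeasure μ] [Fintype α] [MeasurableSpace α] [MeasurableSingletonClass α]
    {m₁ m₂ : MeasurableSpace Ω} (hm₁ : m₁ ≤ mΩ) (hm₂ : m₂ ≤ mΩ) (hind : Indep m₁ m₂ μ)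
    {X : Ω → α} (hX : Measurable[m₁] X) {f : α → Ω → ℝ≥0∞} (hf : ∀ a, Measurable[m₂] (f a))
    {c : ℝ≥0∞} (hc : ∀ a, ∫⁻ ω, f a ω ∂μ ≤ c) :
    ∫⁻ ω, f (X ω) ω ∂μ ≤ c := by
  have hXa : ∀ a, MeasurableSet[m₁] (X ⁻¹' {a}) := fun a => hX (measurableSet_singleton a)
  have hind_a : ∀ a, Measurable[m₁] ((X ⁻¹' {a}).indicator (1 : Ω → ℝ≥0∞)) := fun a =>
    (@measurable_one _ _ _ m₁ _).indicator (hXa a)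
  have hsplit : ∀ ω, f (X ω) ω = ∑ a, (X ⁻¹' {a}).indicator (1 : Ω → ℝ≥0∞) ω * f a ω := by
    intro ω
    rw [sum_eq_single (X ω) (fun a _ ha => by simp [Ne.symm ha]) (by simp)]
    simp
  calc ∫⁻ ω, f (X ω) ω ∂μ = ∑ a, ∫⁻ ω, (X ⁻¹' {a}).indicator (1 : Ω → ℝ≥0∞) ω * f a ω ∂μ := by
        simp_rw [hsplit]
        exact lintegral_finsetSum _ fun a _ =>
          ((hind_a a).mono hm₁ le_rfl).mul ((hf a).mono hm₂ le_rfl)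
    _ = ∑ a, μ (X ⁻¹' {a}) * ∫⁻ ω, f a ω ∂μ := by
        refine sum_congr rfl fun a _ => ?_
        rw [lintegral_mul_eq_lintegral_mul_lintegral_of_independent_measurableSpace hm₁ hm₂ hind
          (hind_a a) (hf a), lintegral_indicator_one (hm₁ _ (hXa a))]
    _ ≤ ∑ a, μ (X ⁻¹' {a}) * c := by gcongr with a; exact hc a
    _ = c := by
        rw [← sum_mul, sum_measure_preimage_singleton _ fun a _ => hm₁ _ (hXa a), coe_univ,
          Set.preimage_univ, measure_univ, one_mul]

section Sampling

variable {V Ω : Type*} [Fintype V] {sample : ℕ × V → Ω → Bool} {A : ℕ → Ω → Finset V}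

/-- The paper's `B_i(u)` in the outcome `ω`. -/
noncomputable def bunch (d : V → V → ℝ≥0∞) (A : ℕ → Ω → Finset V) (u : V) (i : ℕ) (ω : Ω) :
    Finset V :=
  (A i ω).filter fun x => d u x < distToFinset d (A (i + 1) ω) u

lemma measurable_bunch [MeasurableSpace Ω] (hA : ∀ i, Measurable (A i)) (d : V → V → ℝ≥0∞)
    (u : V) (i : ℕ) : Measurable (bunch d A u i) := by
  refine measurable_finset_iff.mpr fun x => ?_
  simp only [bunch, mem_filter]
  have hlt : Measurable fun S : Finset V => d u x < distToFinset d S u := .of_discrete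
  exact (measurable_finset_iff.mp (hA i) x).and (hlt.comp (hA (i + 1)))

lemma measurable_sampledSet [m : MeasurableSpace Ω] (hA0 : ∀ ω, A 0 ω = Finset.univ)
    (hAsucc : ∀ i ω v, v ∈ A (i + 1) ω ↔ v ∈ A i ω ∧ sample (i + 1, v) ω = true) {i : ℕ}
    (hsample : ∀ l ≤ i, ∀ v, Measurable (sample (l, v))) : Measurable (A i) := by
  induction i with
  | zero =>
    rw [funext hA0]
    exact measurable_const
  | succ i ih =>
    refine measurable_finset_iff.mpr fun v => ?_
    simp_rw [hAsucc]
    exact (measurable_finset_iff.mp (ih fun l hl => hsample l (by omega)) v).and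
      (measurableSet_setOfPred.mp ((hsample (i + 1) le_rfl v) (measurableSet_singleton true)))

lemma lintegral_card_bunch_le [MeasurableSpace Ω] {μ : Measure Ω} [IsProbabilityMeasure μ]
    (hmeas : ∀ iv, Measurable (sample iv)) (hindep : iIndepFun sample μ) {p : ℝ≥0∞} (hp : p ≤ 1)
    (hber : ∀ iv, μ {ω | sample iv ω = true} = p) (hA0 : ∀ ω, A 0 ω = Finset.univ)
    (hAsucc : ∀ i ω v, v ∈ A (i + 1) ω ↔ v ∈ A i ω ∧ sample (i + 1, v) ω = true)
    (d : V → V → ℝ≥0∞) (u : V) (hinj : Function.Injective (d u)) (i : ℕ) :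
    ∫⁻ ω, #(bunch d A u i ω) ∂μ ≤ p⁻¹ := by
  set G : Finset V → V → Set Ω := fun S x =>
    {ω | ∀ y ∈ S.filter (d u · ≤ d u x), sample (i + 1, y) ω = false}
  -- `F (A i ω) ω` dominates `#(bunch d A u i ω)`, and `F S` only sees the samples of level `i + 1`.
  set F : Finset V → Ω → ℝ≥0∞ := fun S ω => #(S.filter (ω ∈ G S ·))
  have hbunch_le : ∀ ω, #(bunch d A u i ω) ≤ F (A i ω) ω := by
    intro ω
    refine Nat.cast_le.mpr (card_le_card (monotone_filter_right _ fun x _ hx y hy => ?_))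
    by_contra hy'
    have hyA : y ∈ A (i + 1) ω := (hAsucc i ω y).mpr ⟨(mem_filter.mp hy).1, by simpa using hy'⟩
    exact (hx.trans_le ((iInf₂_le y hyA).trans (mem_filter.mp hy).2)).false
  set σ : Set (ℕ × V) → MeasurableSpace Ω := fun J => ⨆ j ∈ J, MeasurableSpace.comap (sample j) ⊤
  have hσ_le : ∀ J, σ J ≤ ‹_› := fun J => iSup₂_le fun j _ => (hmeas j).comap_le
  have hσ_meas : ∀ J, ∀ j ∈ J, Measurable[σ J] (sample j) := fun J j hj =>
    measurable_iff_comap_le.mpr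
      (le_iSup₂ (f := fun j _ => MeasurableSpace.comap (sample j) ⊤) j hj)
  have hind : Indep (σ {j | j.1 ≤ i}) (σ {j | j.1 = i + 1}) μ :=
    indep_iSup_of_disjoint (fun j => (hmeas j).comap_le) ((iIndepFun_iff_iIndep _ _ _).mp hindep)
      (Set.disjoint_left.mpr fun j h1 h2 => by simp only [Set.mem_ofPred_eq] at h1 h2; omega)
  calc ∫⁻ ω, #(bunch d A u i ω) ∂μ
      ≤ ∫⁻ ω, F (A i ω) ω ∂μ := lintegral_mono hbunch_le
    _ ≤ p⁻¹ := by
      refine lintegral_apply_le_of_indep (hσ_le _) (hσ_le _) hind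
        (measurable_sampledSet (m := σ _) hA0 hAsucc fun l hl v => hσ_meas _ (l, v) hl)
        (fun S => ?_) (fun S => ?_)
      · exact measurable_card_filter (mΩ := σ _) S fun x => measurableSet_forall_eq_false
          (mΩ := σ _) (fun y => hσ_meas {j | j.1 = i + 1} (i + 1, y) rfl) _
      · simp only [F]
        rw [lintegral_card_filter S fun x => measurableSet_forall_eq_false
          (X := fun y => sample (i + 1, y)) (fun y => hmeas _) _]
        simp only [measure_forall_eq_false (X := fun y => sample (i + 1, y)) (fun y => hmeas _)
          (hindep.precomp (Prod.mk_right_injective (i + 1))) (fun y => hber _)]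
        exact sum_one_sub_pow_card_filter_le hinj.injOn hp

end Sampling

lemma lintegral_card_biUnion_union_le {V Ω : Type*} [Countable V] [MeasurableSpace Ω]
    {μ : Measure Ω} {B : ℕ → Ω → Finset V} {C : Ω → Finset V} (hB : ∀ i, Measurable (B i))
    (hC : Measurable C) (m : ℕ) :
    ∫⁻ ω, (#((range m).biUnion (B · ω) ∪ C ω) : ℝ≥0∞) ∂μ ≤
      ∑ i ∈ range m, ∫⁻ ω, #(B i ω) ∂μ + ∫⁻ ω, #(C ω) ∂μ := by
  have hcard : Measurable fun s : Finset V => (#s : ℝ≥0∞) := .of_discrete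
  have hBm : ∀ i, Measurable fun ω => (#(B i ω) : ℝ≥0∞) := fun i => hcard.comp (hB i)
  have hCm : Measurable fun ω => (#(C ω) : ℝ≥0∞) := hcard.comp hC
  calc ∫⁻ ω, (#((range m).biUnion (B · ω) ∪ C ω) : ℝ≥0∞) ∂μ
      ≤ ∫⁻ ω, ∑ i ∈ range m, (#(B i ω) : ℝ≥0∞) + #(C ω) ∂μ := by
        refine lintegral_mono fun ω => ?_
        rw [← Nat.cast_sum, ← Nat.cast_add, Nat.cast_le]
        exact (card_union_le _ _).trans (Nat.add_le_add_right card_biUnion_le _)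
    _ = ∑ i ∈ range m, ∫⁻ ω, #(B i ω) ∂μ + ∫⁻ ω, #(C ω) ∂μ := by
        rw [lintegral_add_right _ hCm, lintegral_finsetSum _ fun i _ => hBm i]

theorem stmt4_general {V Ω : Type*} [Fintype V] [MeasurableSpace Ω]
    (μ : Measure Ω) [IsProbabilityMeasure μ]
    (d : V → V → ℝ≥0∞) (k : ℕ)
    (n : ℕ) (hn1 : 1 ≤ n)
    (sample : ℕ × V → Ω → Bool)
    (hmeas : ∀ iv, Measurable (sample iv))
    -- each inclusion indicator is Bernoulli with probability p = n^{-1/k}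
    (hber : ∀ iv, μ {ω | sample iv ω = true} = (n : ℝ≥0∞) ^ (-(1 : ℝ) / k))
    -- the indicators are mutually independent
    (hindep : ProbabilityTheory.iIndepFun sample μ)
    (A : ℕ → Ω → Finset V)
    (hA0 : ∀ ω, A 0 ω = Finset.univ)
    (hAsucc : ∀ i ω v, v ∈ A (i + 1) ω ↔ v ∈ A i ω ∧ sample (i + 1, v) ω = true)
    (u : V)
    -- distances from u are distinct (ties broken consistently)
    (hinj : ∀ x y : V, d u x = d u y → x = y) :
    (∀ i, i ≤ k - 2 →
      ∫⁻ ω, (((A i ω).filter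
          (fun x => d u x < distToFinset d (A (i + 1) ω) u)).card : ℝ≥0∞) ∂μ ≤
        (n : ℝ≥0∞) ^ ((1 : ℝ) / k)) ∧
    ∫⁻ ω, (((((Finset.range (k - 1)).biUnion
          (fun i => (A i ω).filter
            (fun x => d u x < distToFinset d (A (i + 1) ω) u))) ∪
          A (k - 1) ω).card : ℕ) : ℝ≥0∞) ∂μ ≤
      (k : ℝ≥0∞) * (n : ℝ≥0∞) ^ ((1 : ℝ) / k) + ∫⁻ ω, ((A (k - 1) ω).card : ℝ≥0∞) ∂μ := by
  have hp : (n : ℝ≥0∞) ^ (-(1 : ℝ) / k) ≤ 1 := by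
    simpa using ENNReal.rpow_le_rpow_of_exponent_le (Nat.one_le_cast.mpr hn1)
      (div_nonpos_of_nonpos_of_nonneg (by norm_num) k.cast_nonneg : -(1 : ℝ) / k ≤ 0)
  have hp_inv : ((n : ℝ≥0∞) ^ (-(1 : ℝ) / k))⁻¹ = (n : ℝ≥0∞) ^ ((1 : ℝ) / k) := by
    rw [neg_div, ENNReal.rpow_neg, inv_inv]
  have hbunch : ∀ i, ∫⁻ ω, #(bunch d A u i ω) ∂μ ≤ (n : ℝ≥0∞) ^ ((1 : ℝ) / k) := fun i =>
    hp_inv ▸ lintegral_card_bunch_le hmeas hindep hp hber hA0 hAsucc d u hinj i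
  have hA : ∀ i, Measurable (A i) := fun i =>
    measurable_sampledSet hA0 hAsucc fun l _ v => hmeas (l, v)
  refine ⟨fun i _ => hbunch i, ?_⟩
  calc _ ≤ _ := lintegral_card_biUnion_union_le (measurable_bunch hA d u) (hA (k - 1)) (k - 1)
    _ ≤ ∑ _i ∈ range (k - 1), (n : ℝ≥0∞) ^ ((1 : ℝ) / k) + ∫⁻ ω, #(A (k - 1) ω) ∂μ := by
        gcongr with i
        exact hbunch i
    _ ≤ _ := by
        rw [sum_const, card_range, nsmul_eq_mul]
        gcongr
        exact_mod_cast k.sub_le 1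

/-- Expected bunch size in the Thorup-Zwick random sampling: if each vertex of
`A_{i-1}` is placed in `A_i` independently with probability `p = n^{-1/k}`, then for
any fixed vertex `u` and `0 ≤ i ≤ k-2` the expected size of
`B_i(u) = { w ∈ A_i : d(u,w) < d(u,A_{i+1}) }` is at most `1/p = n^{1/k}`, and the
expected total bunch size (with `B_{k-1}(u) = A_{k-1}`) is at most
`k·n^{1/k} + E[|A_{k-1}|]`. -/
theorem stmt4 {V Ω : Type*} [Fintype V] [MeasurableSpace Ω]
    (μ : Measure Ω) [IsProbabilityMeasure μ]
    (d : V → V → ℝ≥0∞) (k : ℕ) (hk : 2 ≤ k)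
    (n : ℕ) (hn : n = Fintype.card V) (hn1 : 1 ≤ n)
    (sample : ℕ × V → Ω → Bool)
    (hmeas : ∀ iv, Measurable (sample iv))
    -- each inclusion indicator is Bernoulli with probability p = n^{-1/k}
    (hber : ∀ iv, μ {ω | sample iv ω = true} = (n : ℝ≥0∞) ^ (-(1 : ℝ) / k))
    -- the indicators are mutually independent
    (hindep : ProbabilityTheory.iIndepFun sample μ)
    (A : ℕ → Ω → Finset V)
    (hA0 : ∀ ω, A 0 ω = Finset.univ)
    (hAsucc : ∀ i ω v, v ∈ A (i + 1) ω ↔ v ∈ A i ω ∧ sample (i + 1, v) ω = true)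
    (u : V)
    -- distances from u are distinct (ties broken consistently)
    (hinj : ∀ x y : V, d u x = d u y → x = y) :
    (∀ i, i ≤ k - 2 →
      ∫⁻ ω, (((A i ω).filter
          (fun x => d u x < distToFinset d (A (i + 1) ω) u)).card : ℝ≥0∞) ∂μ ≤
        (n : ℝ≥0∞) ^ ((1 : ℝ) / k)) ∧
    ∫⁻ ω, (((((Finset.range (k - 1)).biUnion
          (fun i => (A i ω).filter
            (fun x => d u x < distToFinset d (A (i + 1) ω) u))) ∪
          A (k - 1) ω).card : ℕ) : ℝ≥0∞) ∂μ ≤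
      (k : ℝ≥0∞) * (n : ℝ≥0∞) ^ ((1 : ℝ) / k) + ∫⁻ ω, ((A (k - 1) ω).card : ℝ≥0∞) ∂μ :=
  stmt4_general μ d k n hn1 sample hmeas hber hindep A hA0 hAsucc u hinj
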